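/- (Theorem 5.4, stability of the inverse multiscale transform.) Let p ≥ 1, J ∈ ℕ, and K, C > 0. Let S be a map sending sequences (indexed by ℤ) of measures in P_p(ℝ^d) to sequences of measures in P_p(ℝ^d) that is stable with constant K: for all sequences μ, ν, sup_{i∈ℤ} W_p((Sμ)_i, (Sν)_i) ≤ K · sup_{i∈ℤ} W_p(μ_i, ν_i). Let μ^{(0)}, μ̃^{(0)} be sequences in P_p(ℝ^d) and, for each ℓ = 1,…,J and i ∈ ℤ, let ψ^{(ℓ)}_i, ψ̃^{(ℓ)}_i : ℝ^d → ℝ^d be Borel measurable maps such that each map I + ψ^{(ℓ)}_i is Lipschitz with Lipschitz constant at most C. Define recursively μ^{(ℓ)}_i = (I + ψ^{(ℓ)}_i)_#(Sμ^{(ℓ−1)})_i and μ̃^{(ℓ)}_i = (I + ψ̃^{(ℓ)}_i)_#(Sμ̃^{(ℓ−1)})_i. Then sup_{i} W_p(μ^{(J)}_i, μ̃^{(J)}_i) ≤ L·( sup_i W_p(μ^{(0)}_i, μ̃^{(0)}_i) + Σ_{ℓ=1}^{J} sup_i (∫‖ψ^{(ℓ)}_i − ψ̃^{(ℓ)}_i‖^p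 d(Sμ̃^{(ℓ−1)})_i)^{1/p} ), where L = 1 if KC ≤ 1 and L = (KC)^J otherwise. -/

import Mathlib

/-! Pushing a coupling `γ` of `α` and `β` forward by `(I + ψ) × (I + ψ̃)` gives a coupling of
`α ⊕ ψ` and `β ⊕ ψ̃`. Since `I + ψ` is `C`-Lipschitz, the displacement of a pair `(x, y)` is at
most `C‖x - y‖ + ‖ψ y - ψ̃ y‖`, so Minkowski's inequality in `L^p(γ)` gives
`W_p(α ⊕ ψ, β ⊕ ψ̃) ≤ C W_p(α, β) + ‖ψ - ψ̃‖_{L^p(β)}`. Together with the stability of `S`, the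
errors `e_ℓ = sup_i W_p(μ^{(ℓ)}_i, μ̃^{(ℓ)}_i)` satisfy `e_{ℓ+1} ≤ KC e_ℓ + D_ℓ`, where `D_ℓ` is
the `ℓ`-th summand of the bound, and unrolling this recursion with `max 1 (KC)` in place of `KC`
gives the claim. -/

open MeasureTheory ENNReal NNReal ProbabilityTheory

noncomputable section

variable {E : Type*} [NormedAddCommGroup E] [MeasurableSpace E]

/-- The set Π(μ,ν) of couplings of `μ` and `ν`: measures on the product whose
first marginal is `μ` and second marginal is `ν`. -/
def couplings (μ ν : Measure E) : Set (Measure (E × E)) :=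
  {γ | γ.map Prod.fst = μ ∧ γ.map Prod.snd = ν}

/-- The Kantorovich transport cost `∫ ‖x - y‖^p dγ(x,y)`. -/
def transportCost (p : ℝ) (γ : Measure (E × E)) : ℝ≥0∞ :=
  ∫⁻ z, (‖z.1 - z.2‖₊ : ℝ≥0∞) ^ p ∂γ

/-- `W_p(μ,ν)^p = inf_{γ ∈ Π(μ,ν)} ∫ ‖x-y‖^p dγ`. -/
def wassersteinPow (p : ℝ) (μ ν : Measure E) : ℝ≥0∞ :=
  ⨅ γ ∈ couplings μ ν, transportCost p γ

/-- The `p`-Wasserstein distance `W_p(μ,ν)`. -/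
def wasserstein (p : ℝ) (μ ν : Measure E) : ℝ≥0∞ :=
  wassersteinPow p μ ν ^ (1 / p)

/-- Membership in the Wasserstein space `P_p`: a Borel probability measure with
finite `p`-th moment. -/
def MemPp (p : ℝ) (μ : Measure E) : Prop :=
  IsProbabilityMeasure μ ∧ ∫⁻ x, (‖x‖₊ : ℝ≥0∞) ^ p ∂μ < ∞

theorem map_prodMap_mem_couplings {X : Type*} [MeasurableSpace X] {μ ν : Measure X}
    {γ : Measure (X × X)} (hγ : γ ∈ couplings μ ν) {f g : X → X} (hf : Measurable f)
    (hg : Measurable g) :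
    γ.map (Prod.map f g) ∈ couplings (μ.map f) (ν.map g) := by
  obtain ⟨hγ₁, hγ₂⟩ := hγ
  constructor
  · rw [Measure.map_map measurable_fst (hf.prodMap hg), ← hγ₁,
      Measure.map_map hf measurable_fst]
    rfl
  · rw [Measure.map_map measurable_snd (hf.prodMap hg), ← hγ₂,
      Measure.map_map hg measurable_snd]
    rfl

theorem LipschitzWith.nnnorm_add_sub_add_le {V : Type*} [SeminormedAddCommGroup V] {C : ℝ≥0}
    {f g : V → V} (hf : LipschitzWith C fun x => x + f x) (x y : V) :
    ‖(x + f x) - (y + g y)‖₊ ≤ C * ‖x - y‖₊ + ‖f y - g y‖₊ := by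
  have hsplit : (x + f x) - (y + g y) = ((x + f x) - (y + f y)) + (f y - g y) := by abel
  rw [hsplit]
  refine (nnnorm_add_le _ _).trans (add_le_add_left ?_ _)
  simpa only [nndist_eq_nnnorm] using hf.nndist_le x y

section Wasserstein

variable {V : Type*} [NormedAddCommGroup V] [MeasurableSpace V]

theorem wasserstein_eq_iInf {p : ℝ} (hp : 0 < p) (μ ν : Measure V) :
    wasserstein p μ ν = ⨅ γ : couplings μ ν, transportCost p (γ : Measure (V × V)) ^ (1 / p) := by
  rw [wasserstein, wassersteinPow, iInf_subtype']
  exact (ENNReal.orderIsoRpow (1 / p) (one_div_pos.2 hp)).map_iInf _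

variable [BorelSpace V] [SecondCountableTopology V]

theorem transportCost_map_prodMap (p : ℝ) (γ : Measure (V × V)) {f g : V → V}
    (hf : Measurable f) (hg : Measurable g) :
    transportCost p (γ.map (Prod.map f g)) = ∫⁻ z, (‖f z.1 - g z.2‖₊ : ℝ≥0∞) ^ p ∂γ :=
  lintegral_map (by fun_prop) (hf.prodMap hg)

theorem transportCost_map_add_rpow_le {p : ℝ} (hp : 1 ≤ p) {C : ℝ≥0} {f g : V → V}
    (hf : Measurable f) (hg : Measurable g) (hLip : LipschitzWith C fun x => x + f x)
    (γ : Measure (V × V)) :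
    transportCost p (γ.map (Prod.map (fun x => x + f x) (fun x => x + g x))) ^ (1 / p) ≤
      C * transportCost p γ ^ (1 / p) +
        (∫⁻ x, (‖f x - g x‖₊ : ℝ≥0∞) ^ p ∂(γ.map Prod.snd)) ^ (1 / p) := by
  have hp₀ : 0 < p := one_pos.trans_le hp
  have hscale : (∫⁻ z, ((C : ℝ≥0∞) * ‖z.1 - z.2‖₊) ^ p ∂γ) ^ (1 / p) =
      C * transportCost p γ ^ (1 / p) := by
    simp_rw [ENNReal.mul_rpow_of_nonneg _ _ hp₀.le]
    rw [lintegral_const_mul _ (by fun_prop), ENNReal.mul_rpow_of_nonneg _ _ (by positivity),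
      ← ENNReal.rpow_mul, mul_one_div_cancel hp₀.ne', ENNReal.rpow_one, transportCost]
  calc transportCost p (γ.map (Prod.map (fun x => x + f x) (fun x => x + g x))) ^ (1 / p)
      ≤ (∫⁻ z, ((C : ℝ≥0∞) * ‖z.1 - z.2‖₊ + ‖f z.2 - g z.2‖₊) ^ p ∂γ) ^ (1 / p) := by
        rw [transportCost_map_prodMap p γ (by fun_prop) (by fun_prop)]
        gcongr with z
        exact_mod_cast hLip.nnnorm_add_sub_add_le z.1 z.2
    _ ≤ (∫⁻ z, ((C : ℝ≥0∞) * ‖z.1 - z.2‖₊) ^ p ∂γ) ^ (1 / p) +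
          (∫⁻ z, (‖f z.2 - g z.2‖₊ : ℝ≥0∞) ^ p ∂γ) ^ (1 / p) :=
        ENNReal.lintegral_Lp_add_le (by fun_prop) (by fun_prop) hp
    _ = _ := by
        rw [hscale, lintegral_map (by fun_prop) measurable_snd]

theorem wasserstein_map_add_le {p : ℝ} (hp : 1 ≤ p) {C : ℝ≥0} (hC : C ≠ 0) {f g : V → V}
    (hf : Measurable f) (hg : Measurable g) (hLip : LipschitzWith C fun x => x + f x)
    (μ ν : Measure V) :
    wasserstein p (μ.map fun x => x + f x) (ν.map fun x => x + g x) ≤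
      C * wasserstein p μ ν + (∫⁻ x, (‖f x - g x‖₊ : ℝ≥0∞) ^ p ∂ν) ^ (1 / p) := by
  have hp₀ : 0 < p := one_pos.trans_le hp
  rw [wasserstein_eq_iInf hp₀ μ ν, ENNReal.mul_iInf_of_ne (by exact_mod_cast hC) coe_ne_top,
    ENNReal.iInf_add]
  refine le_iInf fun ⟨γ, hγ⟩ => ?_
  calc wasserstein p (μ.map fun x => x + f x) (ν.map fun x => x + g x)
      ≤ transportCost p (γ.map (Prod.map (fun x => x + f x) (fun x => x + g x))) ^ (1 / p) := by
        rw [wasserstein_eq_iInf hp₀]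
        exact iInf_le (fun γ' : couplings _ _ => transportCost p (γ' : Measure (V × V)) ^ (1 / p))
          ⟨_, map_prodMap_mem_couplings hγ (measurable_id.add hf) (measurable_id.add hg)⟩
    _ ≤ C * transportCost p γ ^ (1 / p) + (∫⁻ x, (‖f x - g x‖₊ : ℝ≥0∞) ^ p ∂ν) ^ (1 / p) := by
        simpa only [hγ.2] using transportCost_map_add_rpow_le hp hf hg hLip γ

theorem iSup_wasserstein_map_add_le {ι : Sort*} {p : ℝ} (hp : 1 ≤ p) {C : ℝ≥0} (hC : C ≠ 0)
    {f g : ι → V → V} (hf : ∀ i, Measurable (f i)) (hg : ∀ i, Measurable (g i))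
    (hLip : ∀ i, LipschitzWith C fun x => x + f i x) (μ ν : ι → Measure V) :
    ⨆ i, wasserstein p ((μ i).map fun x => x + f i x) ((ν i).map fun x => x + g i x) ≤
      C * (⨆ i, wasserstein p (μ i) (ν i)) +
        ⨆ i, (∫⁻ x, (‖f i x - g i x‖₊ : ℝ≥0∞) ^ p ∂(ν i)) ^ (1 / p) :=
  iSup_le fun i => (wasserstein_map_add_le hp hC (hf i) (hg i) (hLip i) _ _).trans <|
    add_le_add (mul_le_mul_right (le_iSup (fun i => wasserstein p (μ i) (ν i)) i) _)
      (le_iSup (fun i => (∫⁻ x, (‖f i x - g i x‖₊ : ℝ≥0∞) ^ p ∂(ν i)) ^ (1 / p)) i)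

end Wasserstein

theorem ENNReal.le_max_one_pow_mul_of_le_mul_add {a D : ℕ → ℝ≥0∞} {c : ℝ≥0∞} {J : ℕ}
    (h : ∀ ℓ < J, a (ℓ + 1) ≤ c * a ℓ + D ℓ) :
    a J ≤ max 1 c ^ J * (a 0 + ∑ ℓ ∈ Finset.range J, D ℓ) := by
  induction J with
  | zero => simp
  | succ J ih =>
    have ih := ih fun ℓ hℓ => h ℓ (hℓ.trans J.lt_succ_self)
    calc a (J + 1) ≤ c * a J + D J := h J J.lt_succ_self
      _ ≤ max 1 c * (max 1 c ^ J * (a 0 + ∑ ℓ ∈ Finset.range J, D ℓ)) +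
            max 1 c ^ (J + 1) * D J := by
        gcongr
        · exact le_max_right _ _
        · exact le_mul_of_one_le_left' (one_le_pow_of_one_le' (le_max_left _ _) _)
      _ = max 1 c ^ (J + 1) * (a 0 + ∑ ℓ ∈ Finset.range (J + 1), D ℓ) := by
        rw [Finset.sum_range_succ, pow_succ]
        ring

theorem ENNReal.max_one_coe_pow (c : ℝ≥0) (J : ℕ) :
    max 1 (c : ℝ≥0∞) ^ J = if c ≤ 1 then 1 else (c : ℝ≥0∞) ^ J := by
  split_ifs with hc
  · rw [max_eq_left (by exact_mod_cast hc), one_pow]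
  · rw [max_eq_right (by exact_mod_cast (not_le.1 hc).le)]

theorem inverse_multiscale_stability_general {d : ℕ} (p : ℝ) (hp : 1 ≤ p) (J : ℕ)
    (K C : ℝ≥0) (hC : 0 < C)
    (S : (ℤ → Measure (EuclideanSpace ℝ (Fin d))) → (ℤ → Measure (EuclideanSpace ℝ (Fin d))))
    (hS : ∀ μ ν : ℤ → Measure (EuclideanSpace ℝ (Fin d)),
      (⨆ i, wasserstein p (S μ i) (S ν i)) ≤ (K : ℝ≥0∞) * ⨆ i, wasserstein p (μ i) (ν i))
    (μ0 ν0 : ℤ → Measure (EuclideanSpace ℝ (Fin d)))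
    (ψ ψt : ℕ → ℤ → EuclideanSpace ℝ (Fin d) → EuclideanSpace ℝ (Fin d))
    (hψm : ∀ ℓ i, Measurable (ψ ℓ i)) (hψtm : ∀ ℓ i, Measurable (ψt ℓ i))
    (hLip : ∀ ℓ i, LipschitzWith C (fun x => x + ψ ℓ i x))
    (μseq νseq : ℕ → ℤ → Measure (EuclideanSpace ℝ (Fin d)))
    (hμinit : μseq 0 = μ0) (hνinit : νseq 0 = ν0)
    (hμrec : ∀ ℓ < J, ∀ i, μseq (ℓ+1) i = ((S (μseq ℓ)) i).map (fun x => x + ψ (ℓ+1) i x))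
    (hνrec : ∀ ℓ < J, ∀ i, νseq (ℓ+1) i = ((S (νseq ℓ)) i).map (fun x => x + ψt (ℓ+1) i x)) :
    (⨆ i, wasserstein p (μseq J i) (νseq J i)) ≤
      (if K * C ≤ 1 then 1 else ((K * C : ℝ≥0) : ℝ≥0∞) ^ J) *
        ((⨆ i, wasserstein p (μ0 i) (ν0 i)) +
          ∑ ℓ ∈ Finset.range J, ⨆ i,
            (∫⁻ x, (‖ψ (ℓ+1) i x - ψt (ℓ+1) i x‖₊ : ℝ≥0∞) ^ p ∂((S (νseq ℓ)) i)) ^ (1 / p)) := by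
  let a : ℕ → ℝ≥0∞ := fun ℓ => ⨆ i, wasserstein p (μseq ℓ i) (νseq ℓ i)
  have hstep : ∀ ℓ < J, a (ℓ + 1) ≤ ((K * C : ℝ≥0) : ℝ≥0∞) * a ℓ + ⨆ i,
      (∫⁻ x, (‖ψ (ℓ+1) i x - ψt (ℓ+1) i x‖₊ : ℝ≥0∞) ^ p ∂((S (νseq ℓ)) i)) ^ (1 / p) := by
    intro ℓ hℓ
    calc a (ℓ + 1)
        ≤ C * (⨆ i, wasserstein p (S (μseq ℓ) i) (S (νseq ℓ) i)) + ⨆ i,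
            (∫⁻ x, (‖ψ (ℓ+1) i x - ψt (ℓ+1) i x‖₊ : ℝ≥0∞) ^ p ∂((S (νseq ℓ)) i)) ^ (1 / p) := by
          simp only [a, hμrec ℓ hℓ, hνrec ℓ hℓ]
          exact iSup_wasserstein_map_add_le hp hC.ne' (hψm _) (hψtm _) (hLip _) _ _
      _ ≤ C * (K * a ℓ) + _ := by gcongr; exact hS _ _
      _ = _ := by push_cast; ring
  rw [← ENNReal.max_one_coe_pow, ← hμinit, ← hνinit]
  exact ENNReal.le_max_one_pow_mul_of_le_mul_add hstep

/-- Theorem 5.4, stability of the inverse multiscale transform. -/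
theorem inverse_multiscale_stability {d : ℕ} (p : ℝ) (hp : 1 ≤ p) (J : ℕ)
    (K C : ℝ≥0) (hK : 0 < K) (hC : 0 < C)
    (S : (ℤ → Measure (EuclideanSpace ℝ (Fin d))) → (ℤ → Measure (EuclideanSpace ℝ (Fin d))))
    (hSPp : ∀ μ : ℤ → Measure (EuclideanSpace ℝ (Fin d)),
      (∀ i, MemPp p (μ i)) → ∀ i, MemPp p (S μ i))
    (hS : ∀ μ ν : ℤ → Measure (EuclideanSpace ℝ (Fin d)),
      (⨆ i, wasserstein p (S μ i) (S ν i)) ≤ (K : ℝ≥0∞) * ⨆ i, wasserstein p (μ i) (ν i))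
    (μ0 ν0 : ℤ → Measure (EuclideanSpace ℝ (Fin d)))
    (hμ0 : ∀ i, MemPp p (μ0 i)) (hν0 : ∀ i, MemPp p (ν0 i))
    (ψ ψt : ℕ → ℤ → EuclideanSpace ℝ (Fin d) → EuclideanSpace ℝ (Fin d))
    (hψm : ∀ ℓ i, Measurable (ψ ℓ i)) (hψtm : ∀ ℓ i, Measurable (ψt ℓ i))
    (hLip : ∀ ℓ i, LipschitzWith C (fun x => x + ψ ℓ i x))
    (μseq νseq : ℕ → ℤ → Measure (EuclideanSpace ℝ (Fin d)))
    (hμinit : μseq 0 = μ0) (hνinit : νseq 0 = ν0)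
    (hμrec : ∀ ℓ < J, ∀ i, μseq (ℓ+1) i = ((S (μseq ℓ)) i).map (fun x => x + ψ (ℓ+1) i x))
    (hνrec : ∀ ℓ < J, ∀ i, νseq (ℓ+1) i = ((S (νseq ℓ)) i).map (fun x => x + ψt (ℓ+1) i x)) :
    (⨆ i, wasserstein p (μseq J i) (νseq J i)) ≤
      (if K * C ≤ 1 then 1 else ((K * C : ℝ≥0) : ℝ≥0∞) ^ J) *
        ((⨆ i, wasserstein p (μ0 i) (ν0 i)) +
          ∑ ℓ ∈ Finset.range J, ⨆ i,
            (∫⁻ x, (‖ψ (ℓ+1) i x - ψt (ℓ+1) i x‖₊ : ℝ≥0∞) ^ p ∂((S (νseq ℓ)) i)) ^ (1 / p)) :=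
  inverse_multiscale_stability_general p hp J K C hC S hS μ0 ν0 ψ ψt hψm hψtm hLip μseq νseq hμinit
    hνinit hμrec hνrec
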